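/- arXiv:2108.10264 — 2 statements merged into one kernel-verified Lean document; each statement's English description precedes it below -/
import Mathlib

section
/- Let T be a taut ideal triangulation that is locally veering. Then T admits a (global) veering structure if and only if the realised manifold |T| is orientable. -/
open Set

noncomputable section

/-- An ideal triangulation with face pairings, presented combinatorially: a collection
of model tetrahedra (each with vertices labelled by `Fin 4`; face `i` is the face
opposite vertex `i`), a fixed-point free involutive face pairing, affine vertex
identifications along paired faces, and a taut angle structure: in each tetrahedron the
two edges of the pair `diag t` and its opposite pair have dihedral angle π, all other
edges have angle 0. -/
structure TautGlue where
  Tet : Type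
  glue : Tet × Fin 4 → Tet × Fin 4
  glueVert : Tet × Fin 4 → Equiv.Perm (Fin 4)
  glue_invol : Function.Involutive glue
  glue_ne : ∀ p, glue p ≠ p
  glueVert_face : ∀ p, glueVert p p.2 = (glue p).2
  glueVert_symm : ∀ p, glueVert (glue p) = (glueVert p)⁻¹
  diag : Tet → Sym2 (Fin 4)
  diag_nd : ∀ t, ¬ (diag t).IsDiag

namespace TautGlue

variable (T : TautGlue)

/-- The model edge `s` of the tetrahedron `t` has dihedral angle π: it is the chosen
diagonal or its opposite edge. -/
def IsPi (t : T.Tet) (s : Sym2 (Fin 4)) : Prop :=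
  s = T.diag t ∨ ∀ x, x ∈ s ↔ x ∉ T.diag t

/-- The cyclically ordered collection of model tetrahedra around an edge of the
realisation: this is the model edge neighbourhood `T_e`. -/
structure EdgeCycle (T : TautGlue) where
  n : ℕ
  t : ZMod (n + 1) → T.Tet
  s : ZMod (n + 1) → Sym2 (Fin 4)
  f : ZMod (n + 1) → Fin 4
  s_nd : ∀ i, ¬ (s i).IsDiag
  f_not_mem : ∀ i, f i ∉ s i
  glue_t : ∀ i, (T.glue (t i, f i)).1 = t (i + 1)
  maps_s : ∀ i, Sym2.map (⇑(T.glueVert (t i, f i))) (s i) = s (i + 1)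
  proper : ∀ i, (T.glue (t i, f i)).2 ≠ f (i + 1)

/-- The taut conditions on the triangulation: every model edge has a (finite) cycle of
tetrahedra around it, and around every edge the dihedral angles sum to 2π, that is,
exactly two of the models of the edge have angle π. -/
structure IsTaut (T : TautGlue) : Prop where
  around : ∀ (t₀ : T.Tet) (s₀ : Sym2 (Fin 4)), ¬ s₀.IsDiag →
    ∃ E : EdgeCycle T, E.t 0 = t₀ ∧ E.s 0 = s₀
  angle_sum : ∀ E : EdgeCycle T, {i : ZMod (E.n + 1) | T.IsPi (E.t i) (E.s i)}.ncard = 2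

end TautGlue

/-- The sign of the sequence `(v, a, b, c)` as a permutation of `(0,1,2,3)`:
`1` if even, `-1` if odd, `0` if the entries are not distinct. -/
def seqSign (v a b c : Fin 4) : ℤ :=
  Int.sign (((a.1 : ℤ) - v.1) * ((b.1 : ℤ) - v.1) * ((c.1 : ℤ) - v.1) *
    ((b.1 : ℤ) - a.1) * ((c.1 : ℤ) - a.1) * ((c.1 : ℤ) - b.1))

/-- The tetrahedron `t`, with orientation `ε` and edge colouring `c` (`true` = red,
`false` = blue), is veering: at each vertex `v`, reading anticlockwise as seen from
outside, the edge following the π-angle edge is blue and the next one is red. -/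
def VeeringTet (T : TautGlue) (t : T.Tet) (ε : ℤ) (c : Sym2 (Fin 4) → Bool) : Prop :=
  ∀ v a b d : Fin 4, T.IsPi t s(v, a) → seqSign v a b d = ε →
    c s(v, b) = false ∧ c s(v, d) = true

/-- An orientation of the triangulation: a coherent choice of orientations of the model
tetrahedra, each face pairing being orientation-reversing on representatives. -/
def OrientCompat (T : TautGlue) (o : T.Tet → ℤ) : Prop :=
  (∀ t, o t = 1 ∨ o t = -1) ∧
    ∀ p : T.Tet × Fin 4, (Equiv.Perm.sign (T.glueVert p) : ℤ) * o p.1 = - o (T.glue p).1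

/-- The realisation `|T|` is orientable. -/
def Orientable (T : TautGlue) : Prop := ∃ o, OrientCompat T o

/-- A (global) veering structure on `T`: an orientation together with a colouring of
the edges of the realisation (i.e. a colouring of model edges invariant under the face
pairings) making every model tetrahedron veering. -/
def HasVeering (T : TautGlue) : Prop :=
  ∃ (o : T.Tet → ℤ) (c : T.Tet → Sym2 (Fin 4) → Bool),
    OrientCompat T o ∧
    (∀ (p : T.Tet × Fin 4) (s : Sym2 (Fin 4)), ¬ s.IsDiag → p.2 ∉ s →
      c (T.glue p).1 (Sym2.map (⇑(T.glueVert p)) s) = c p.1 s) ∧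
    ∀ t, VeeringTet T t (o t) (c t)

/-- `T` is locally veering: for every edge, the model edge neighbourhood `T_e` (the
cycle of tetrahedra around the edge, glued only along the faces meeting the edge)
admits an orientation and a veering colouring. -/
def LocallyVeering (T : TautGlue) : Prop :=
  ∀ E : TautGlue.EdgeCycle T,
    ∃ (ε : ZMod (E.n + 1) → ℤ) (c : ZMod (E.n + 1) → Sym2 (Fin 4) → Bool),
      (∀ i, ε i = 1 ∨ ε i = -1) ∧
      (∀ i, (Equiv.Perm.sign (T.glueVert (E.t i, E.f i)) : ℤ) * ε i = - ε (i + 1)) ∧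
      (∀ i (s : Sym2 (Fin 4)), ¬ s.IsDiag → E.f i ∉ s →
        c (i + 1) (Sym2.map (⇑(T.glueVert (E.t i, E.f i))) s) = c i s) ∧
      ∀ i, VeeringTet T (E.t i) (ε i) (c i)

/-!
A veering structure contains an orientation. Conversely, fix an orientation `o`. In an
oriented taut tetrahedron the veering rule forces the colour of every edge of angle `0`: it is
red exactly when it comes second after a π-edge at one of its endpoints. Around an edge `e` of
`|T|`, the orientation of a local veering structure on `T_e` agrees with `o` everywhere or
disagrees everywhere, so after swapping the colours it is veering for `o`; its colour of `e` is
constant around `e`, hence all angle-`0` models of `e` have the same forced colour. Colouring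
`e` by this common value (arbitrarily if all its models have angle π) is a veering structure.
-/

lemma seqSign_swap (v a b d : Fin 4) : seqSign v a d b = - seqSign v a b d := by
  decide +revert

lemma ne_of_seqSign_ne_zero {v a b d : Fin 4} (h : seqSign v a b d ≠ 0) :
    v ≠ a ∧ v ≠ b ∧ v ≠ d ∧ a ≠ b ∧ a ≠ d := by
  decide +revert

lemma exists_seqSign_eq {ε : ℤ} (hε : ε = 1 ∨ ε = -1) {v a b : Fin 4}
    (hva : v ≠ a) (hvb : v ≠ b) (hab : a ≠ b) :
    ∃ d, seqSign v a b d = ε ∨ seqSign v a d b = ε := by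
  rcases hε with rfl | rfl <;> decide +revert

/-- `T.IsPi t` is definitionally `EqOrOpposite (T.diag t)`. -/
def EqOrOpposite (e e' : Sym2 (Fin 4)) : Prop :=
  e' = e ∨ ∀ x, x ∈ e' ↔ x ∉ e

instance (e e' : Sym2 (Fin 4)) : Decidable (EqOrOpposite e e') := by
  unfold EqOrOpposite; infer_instance

lemma eqOrOpposite_trans {e e₁ e₂ : Sym2 (Fin 4)} (hnd : ¬ e.IsDiag)
    (h₁ : EqOrOpposite e e₁) (h₂ : EqOrOpposite e e₂) : EqOrOpposite e₁ e₂ := by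
  induction e using Sym2.ind
  induction e₁ using Sym2.ind
  induction e₂ using Sym2.ind
  rw [Sym2.mk_isDiag_iff] at hnd
  decide +revert

lemma eq_of_eqOrOpposite_mk {v a b : Fin 4} (hva : v ≠ a) (h : EqOrOpposite s(v, a) s(v, b)) :
    b = a := by
  decide +revert

lemma exists_eqOrOpposite_mk {e : Sym2 (Fin 4)} (hnd : ¬ e.IsDiag) (v : Fin 4) :
    ∃ a, a ≠ v ∧ EqOrOpposite e s(v, a) := by
  induction e using Sym2.ind
  rw [Sym2.mk_isDiag_iff] at hnd
  decide +revert

/-- At a common endpoint of two π-edges, no edge comes first after one of them and second after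
the other, for the same orientation. -/
lemma seqSign_consistent {v a b d v' a' b' d' : Fin 4} (hπ : EqOrOpposite s(v, a) s(v', a'))
    (hsgn : seqSign v' a' b' d' = seqSign v a b d) (hne : seqSign v a b d ≠ 0) :
    s(v, d) ≠ s(v', b') := by
  decide +revert

lemma eq_or_eq_of_not_mem {e : Sym2 (Fin 4)} (hnd : ¬ e.IsDiag) {f g h : Fin 4}
    (hf : f ∉ e) (hg : g ∉ e) (hh : h ∉ e) (hgh : g ≠ h) : f = g ∨ f = h := by
  induction e using Sym2.ind
  rw [Sym2.mk_isDiag_iff] at hnd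
  decide +revert

lemma ZMod.apply_eq_apply_zero {n : ℕ} {α : Type*} {g : ZMod (n + 1) → α}
    (hg : ∀ i, g (i + 1) = g i) (i : ZMod (n + 1)) : g i = g 0 := by
  obtain ⟨k, rfl⟩ := ZMod.natCast_zmod_surjective i
  induction k with
  | zero => rw [Nat.cast_zero]
  | succ k ih => rw [Nat.cast_succ, hg, ih]

namespace TautGlue

variable {T : TautGlue}

lemma IsPi.eqOrOpposite {t : T.Tet} {e₁ e₂ : Sym2 (Fin 4)} (h₁ : T.IsPi t e₁)
    (h₂ : T.IsPi t e₂) : EqOrOpposite e₁ e₂ :=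
  eqOrOpposite_trans (T.diag_nd t) h₁ h₂

lemma IsPi.eq_of_mk {t : T.Tet} {v a b : Fin 4} (hva : v ≠ a) (ha : T.IsPi t s(v, a))
    (hb : T.IsPi t s(v, b)) : b = a :=
  eq_of_eqOrOpposite_mk hva (ha.eqOrOpposite hb)

lemma exists_isPi_mk (t : T.Tet) (v : Fin 4) : ∃ a, a ≠ v ∧ T.IsPi t s(v, a) :=
  exists_eqOrOpposite_mk (T.diag_nd t) v

instance (t : T.Tet) (e : Sym2 (Fin 4)) : Decidable (T.IsPi t e) :=
  inferInstanceAs (Decidable (EqOrOpposite _ _))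

variable (T) in
def forcedColour (t : T.Tet) (ε : ℤ) (e : Sym2 (Fin 4)) : Bool :=
  decide (∃ v a b d, T.IsPi t s(v, a) ∧ seqSign v a b d = ε ∧ e = s(v, d))

lemma forcedColour_mk_eq_false {t : T.Tet} {ε : ℤ} {v a b d : Fin 4} (ha : T.IsPi t s(v, a))
    (hsgn : seqSign v a b d = ε) (hε : ε ≠ 0) : T.forcedColour t ε s(v, b) = false := by
  simp only [forcedColour, decide_eq_false_iff_not, not_exists, not_and]
  intro v' a' b' d' ha' hsgn' hb
  exact seqSign_consistent (ha'.eqOrOpposite ha) (hsgn.trans hsgn'.symm) (hsgn' ▸ hε) hb.symm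

lemma veeringTet_forcedColour (t : T.Tet) {ε : ℤ} (hε : ε ≠ 0) :
    VeeringTet T t ε (T.forcedColour t ε) := fun v a b d ha hsgn =>
  ⟨forcedColour_mk_eq_false ha hsgn hε, decide_eq_true ⟨v, a, b, d, ha, hsgn, rfl⟩⟩

end TautGlue

namespace VeeringTet

open TautGlue

variable {T : TautGlue} {t : T.Tet} {ε : ℤ} {c : Sym2 (Fin 4) → Bool}

lemma neg (hc : VeeringTet T t ε c) : VeeringTet T t (-ε) fun e => !c e := by
  intro v a b d ha hsgn
  obtain ⟨hd, hb⟩ := hc v a d b ha (by rw [seqSign_swap, hsgn, neg_neg])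
  simp [hb, hd]

lemma congr (hc : VeeringTet T t ε c) (hε : ε ≠ 0) {c' : Sym2 (Fin 4) → Bool}
    (hcc' : ∀ e, ¬ e.IsDiag → ¬ T.IsPi t e → c e = c' e) : VeeringTet T t ε c' := by
  intro v a b d ha hsgn
  obtain ⟨hva, hvb, hvd, hab, had⟩ := ne_of_seqSign_ne_zero (hsgn ▸ hε)
  rw [← hcc' s(v, b) (Sym2.mk_isDiag_iff.not.2 hvb) fun hb => hab (ha.eq_of_mk hva hb).symm,
    ← hcc' s(v, d) (Sym2.mk_isDiag_iff.not.2 hvd) fun hd => had (ha.eq_of_mk hva hd).symm]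
  exact hc v a b d ha hsgn

lemma eq_forcedColour (hc : VeeringTet T t ε c) (hε : ε = 1 ∨ ε = -1) {e : Sym2 (Fin 4)}
    (hnd : ¬ e.IsDiag) (hnπ : ¬ T.IsPi t e) : c e = T.forcedColour t ε e := by
  induction e using Sym2.ind with | _ v b => ?_
  obtain ⟨a, hav, ha⟩ := exists_isPi_mk t v
  have hε0 : ε ≠ 0 := by rcases hε with rfl | rfl <;> decide
  obtain ⟨d, hsgn | hsgn⟩ := exists_seqSign_eq hε hav.symm (Sym2.mk_isDiag_iff.not.1 hnd)
    fun hab => hnπ (hab ▸ ha)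
  · rw [(hc v a b d ha hsgn).1, forcedColour_mk_eq_false ha hsgn hε0]
  · rw [(hc v a d b ha hsgn).2]
    exact (decide_eq_true ⟨v, a, d, b, ha, hsgn, rfl⟩).symm

end VeeringTet

namespace TautGlue

variable {T : TautGlue}

namespace EdgeCycle

/-- The orientation of a local veering structure around `E` has constant ratio to `o`, since
both change by the sign of each face pairing. -/
lemma exists_veering_of_orientCompat (hLV : LocallyVeering T) {o : T.Tet → ℤ}
    (ho : OrientCompat T o) (E : EdgeCycle T) :
    ∃ c : ZMod (E.n + 1) → Sym2 (Fin 4) → Bool,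
      (∀ i, VeeringTet T (E.t i) (o (E.t i)) (c i)) ∧
      ∀ i, c (i + 1) (E.s (i + 1)) = c i (E.s i) := by
  obtain ⟨ε, c, hε, hε_glue, hc_glue, hc⟩ := hLV E
  have hc_step : ∀ i, c (i + 1) (E.s (i + 1)) = c i (E.s i) := fun i => by
    rw [← E.maps_s i, hc_glue i (E.s i) (E.s_nd i) (E.f_not_mem i)]
  have hratio : ∀ i, ε i * o (E.t i) = ε 0 * o (E.t 0) := by
    refine ZMod.apply_eq_apply_zero fun i => ?_
    set σ : ℤ := (Equiv.Perm.sign (T.glueVert (E.t i, E.f i)) : ℤ)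
    have ho_glue : σ * o (E.t i) = -o (E.t (i + 1)) := by
      rw [← E.glue_t]; exact ho.2 (E.t i, E.f i)
    have hσ : σ * σ = 1 := Int.isUnit_mul_self (Equiv.Perm.sign _).isUnit
    linear_combination o (E.t (i + 1)) * hε_glue i - σ * ε i * ho_glue + ε i * o (E.t i) * hσ
  have hε_eq : ∀ i, ε i = ε 0 * o (E.t 0) * o (E.t i) := fun i => by
    rw [← hratio i, mul_assoc, Int.isUnit_mul_self (Int.isUnit_iff.2 (ho.1 _)), mul_one]
  rcases Int.isUnit_iff.1 ((Int.isUnit_iff.2 (hε 0)).mul (Int.isUnit_iff.2 (ho.1 (E.t 0))))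
    with hδ | hδ
  · refine ⟨c, fun i => ?_, hc_step⟩
    simpa [hε_eq i, hδ] using hc i
  · refine ⟨fun i e => !c i e, fun i => ?_, fun i => by simp only [hc_step]⟩
    simpa [hε_eq i, hδ] using (hc i).neg

lemma forcedColour_eq (hLV : LocallyVeering T) {o : T.Tet → ℤ} (ho : OrientCompat T o)
    (E : EdgeCycle T) {i j : ZMod (E.n + 1)} (hi : ¬ T.IsPi (E.t i) (E.s i))
    (hj : ¬ T.IsPi (E.t j) (E.s j)) :
    T.forcedColour (E.t i) (o (E.t i)) (E.s i) = T.forcedColour (E.t j) (o (E.t j)) (E.s j) := by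
  obtain ⟨c, hc, hc_step⟩ := E.exists_veering_of_orientCompat hLV ho
  rw [← (hc i).eq_forcedColour (ho.1 _) (E.s_nd i) hi,
    ← (hc j).eq_forcedColour (ho.1 _) (E.s_nd j) hj,
    ZMod.apply_eq_apply_zero (g := fun k => c k (E.s k)) hc_step i,
    ZMod.apply_eq_apply_zero (g := fun k => c k (E.s k)) hc_step j]

end EdgeCycle

variable (T) in
/-- On non-diagonal model edges, `Quot T.Step` is the set of edges of `|T|`. -/
def Step (m m' : T.Tet × Sym2 (Fin 4)) : Prop :=
  ∃ f ∉ m.2, m' = ((T.glue (m.1, f)).1, Sym2.map (T.glueVert (m.1, f)) m.2)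

lemma map_glueVert_glue (p : T.Tet × Fin 4) (s : Sym2 (Fin 4)) :
    Sym2.map (T.glueVert (T.glue p)) (Sym2.map (T.glueVert p) s) = s := by
  rw [T.glueVert_symm, Sym2.map_map, ← Equiv.Perm.coe_mul, inv_mul_cancel, Equiv.Perm.coe_one,
    Sym2.map_id, id_eq]

lemma glue_snd_not_mem_map {p : T.Tet × Fin 4} {s : Sym2 (Fin 4)} (hs : p.2 ∉ s) :
    (T.glue p).2 ∉ Sym2.map (T.glueVert p) s := by
  rw [← T.glueVert_face]
  simpa only [Sym2.mem_map, EmbeddingLike.apply_eq_iff_eq, exists_eq_right] using hs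

lemma Step.symm {m m' : T.Tet × Sym2 (Fin 4)} (h : T.Step m m') : T.Step m' m := by
  obtain ⟨f, hf, rfl⟩ := h
  refine ⟨(T.glue (m.1, f)).2, glue_snd_not_mem_map hf, ?_⟩
  rw [Prod.mk.eta, T.glue_invol, map_glueVert_glue]

namespace EdgeCycle

/-- The two faces of `E.t i` containing `E.s i` lead to the neighbours `i ± 1` in the cycle. -/
lemma exists_eq_of_step (E : EdgeCycle T) (i : ZMod (E.n + 1)) {m : T.Tet × Sym2 (Fin 4)}
    (h : T.Step (E.t i, E.s i) m) : ∃ j, m = (E.t j, E.s j) := by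
  obtain ⟨f, hf, rfl⟩ := h
  set p := (E.t (i - 1), E.f (i - 1))
  have hp : T.glue p = (E.t i, (T.glue p).2) := Prod.ext (by rw [E.glue_t, sub_add_cancel]) rfl
  have hs : Sym2.map (T.glueVert p) (E.s (i - 1)) = E.s i := by rw [E.maps_s, sub_add_cancel]
  have hne : (T.glue p).2 ≠ E.f i := by simpa only [sub_add_cancel] using E.proper (i - 1)
  have hp_not_mem : (T.glue p).2 ∉ E.s i := hs ▸ glue_snd_not_mem_map (E.f_not_mem (i - 1))
  rcases eq_or_eq_of_not_mem (E.s_nd i) hf (E.f_not_mem i) hp_not_mem hne.symm with rfl | rfl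
  · exact ⟨i + 1, by rw [E.glue_t, E.maps_s]⟩
  · refine ⟨i - 1, ?_⟩
    rw [← hp, T.glue_invol, ← hs, map_glueVert_glue]

lemma exists_eq_of_mk_eq (E : EdgeCycle T) (i : ZMod (E.n + 1)) {m : T.Tet × Sym2 (Fin 4)}
    (h : Quot.mk T.Step (E.t i, E.s i) = Quot.mk T.Step m) : ∃ j, m = (E.t j, E.s j) := by
  suffices ∀ m m', Relation.EqvGen T.Step m m' →
      ((∃ j, m = (E.t j, E.s j)) ↔ ∃ j, m' = (E.t j, E.s j)) from
    (this _ _ (Quot.eqvGen_exact h)).1 ⟨i, rfl⟩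
  intro m m' hmm'
  induction hmm' with
  | rel m m' hstep =>
    constructor
    · rintro ⟨j, rfl⟩; exact E.exists_eq_of_step j hstep
    · rintro ⟨j, rfl⟩; exact E.exists_eq_of_step j hstep.symm
  | refl => exact Iff.rfl
  | symm _ _ _ ih => exact ih.symm
  | trans _ _ _ _ _ ih₁ ih₂ => exact ih₁.trans ih₂

end EdgeCycle

variable (T) in
open Classical in
def edgeColour (o : T.Tet → ℤ) (q : Quot T.Step) : Bool :=
  if h : ∃ m, Quot.mk T.Step m = q ∧ ¬ T.IsPi m.1 m.2 then
    T.forcedColour h.choose.1 (o h.choose.1) h.choose.2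
  else true

section EdgeColour

variable (hT : T.IsTaut) (hLV : LocallyVeering T) {o : T.Tet → ℤ} (ho : OrientCompat T o)
include hT hLV ho

lemma forcedColour_eq_of_mk_eq {m m' : T.Tet × Sym2 (Fin 4)} (hnd : ¬ m.2.IsDiag)
    (hm : ¬ T.IsPi m.1 m.2) (hm' : ¬ T.IsPi m'.1 m'.2)
    (h : Quot.mk T.Step m = Quot.mk T.Step m') :
    T.forcedColour m.1 (o m.1) m.2 = T.forcedColour m'.1 (o m'.1) m'.2 := by
  obtain ⟨E, hE_t, hE_s⟩ := hT.around m.1 m.2 hnd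
  obtain rfl : m = (E.t 0, E.s 0) := by rw [hE_t, hE_s]
  obtain ⟨j, rfl⟩ := E.exists_eq_of_mk_eq 0 h
  exact E.forcedColour_eq hLV ho hm hm'

lemma edgeColour_mk {t : T.Tet} {e : Sym2 (Fin 4)} (hnd : ¬ e.IsDiag) (hnπ : ¬ T.IsPi t e) :
    T.edgeColour o (Quot.mk T.Step (t, e)) = T.forcedColour t (o t) e := by
  have h : ∃ m, Quot.mk T.Step m = Quot.mk T.Step (t, e) ∧ ¬ T.IsPi m.1 m.2 :=
    ⟨(t, e), rfl, hnπ⟩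
  rw [edgeColour, dif_pos h]
  exact (forcedColour_eq_of_mk_eq hT hLV ho hnd hnπ h.choose_spec.2 h.choose_spec.1.symm).symm

end EdgeColour

end TautGlue

/-- A locally veering taut ideal triangulation admits a veering structure if and only
if its realisation is orientable. -/
theorem locally_veering_iff_orientable (T : TautGlue) (hT : TautGlue.IsTaut T)
    (hLV : LocallyVeering T) : HasVeering T ↔ Orientable T := by
  refine ⟨fun ⟨o, _, ho, _⟩ => ⟨o, ho⟩, fun ⟨o, ho⟩ => ?_⟩
  have ho_ne : ∀ t, o t ≠ 0 := fun t => by rcases ho.1 t with h | h <;> rw [h] <;> decide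
  refine ⟨o, fun t e => T.edgeColour o (Quot.mk T.Step (t, e)), ho, fun p s _ hs => ?_,
    fun t => ?_⟩
  · exact congrArg (T.edgeColour o) (Quot.sound ⟨p.2, hs, rfl⟩).symm
  · exact (TautGlue.veeringTet_forcedColour t (ho_ne t)).congr (ho_ne t)
      fun e hnd hnπ => (TautGlue.edgeColour_mk hT hLV ho hnd hnπ).symm
end
end

section
/- Guéritaud's construction is a functor from the category of loom spaces (objects: loom spaces; morphisms: loom isomorphisms) to the category of locally veering taut ideal triangulations (morphisms: taut isomorphisms): it sends identities to identities, compositions to compositions, and each loom isomorphism to a taut isomorphism of the induced triangulations. -/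
open Set Topology Filter

noncomputable section

/-- The open unit square `(0,1) × (0,1)`. -/
def unitSq : Set (ℝ × ℝ) := Set.Ioo (0:ℝ) 1 ×ˢ Set.Ioo (0:ℝ) 1

/-- The closed unit square `[0,1] × [0,1]`. -/
def closedSq : Set (ℝ × ℝ) := Set.Icc (0:ℝ) 1 ×ˢ Set.Icc (0:ℝ) 1

/-- The four corners of the unit square. -/
def sqCorners : Set (ℝ × ℝ) := {((0:ℝ),(0:ℝ)), ((1:ℝ),(0:ℝ)), ((1:ℝ),(1:ℝ)), ((0:ℝ),(1:ℝ))}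

/-- The four closed sides of the unit square. -/
def sqSides : Set (Set (ℝ × ℝ)) :=
  { Set.Icc (0:ℝ) 1 ×ˢ ({0} : Set ℝ), Set.Icc (0:ℝ) 1 ×ˢ ({1} : Set ℝ),
    ({0} : Set ℝ) ×ˢ Set.Icc (0:ℝ) 1, ({1} : Set ℝ) ×ˢ Set.Icc (0:ℝ) 1 }

/-- `f` and `g` are mutually inverse homeomorphisms between `D` and `R`. -/
structure HomeoOn (f g : ℝ × ℝ → ℝ × ℝ) (D R : Set (ℝ × ℝ)) : Prop where
  contOn : ContinuousOn f D
  mapsTo : Set.MapsTo f D R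
  contOn_inv : ContinuousOn g R
  mapsTo_inv : Set.MapsTo g R D
  left_inv : ∀ x ∈ D, g (f x) = x
  right_inv : ∀ y ∈ R, f (g y) = y

/-- Data of a pair of (transverse, nonsingular) foliations of the plane, recorded by the
upper leaf and lower leaf through each point. -/
structure LoomPre where
  upLeaf : ℝ × ℝ → Set (ℝ × ℝ)
  loLeaf : ℝ × ℝ → Set (ℝ × ℝ)
  mem_upLeaf : ∀ p, p ∈ upLeaf p
  mem_loLeaf : ∀ p, p ∈ loLeaf p
  upLeaf_eq : ∀ p q, q ∈ upLeaf p → upLeaf q = upLeaf p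
  loLeaf_eq : ∀ p q, q ∈ loLeaf p → loLeaf q = loLeaf p
  upLeaf_conn : ∀ p, IsConnected (upLeaf p)
  loLeaf_conn : ∀ p, IsConnected (loLeaf p)

namespace LoomPre

variable (L : LoomPre)

/-- A parametrisation of a rectangle: a homeomorphism from the open unit square taking
horizontal lines into leaves of the lower foliation and vertical lines into leaves of the
upper foliation. -/
structure IsRectParam (f g : ℝ × ℝ → ℝ × ℝ) (R : Set (ℝ × ℝ)) : Prop where
  homeo : HomeoOn f g unitSq R
  image : f '' unitSq = R
  horiz : ∀ x ∈ unitSq, ∀ y ∈ unitSq, x.2 = y.2 → f x ∈ L.loLeaf (f y)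
  vert : ∀ x ∈ unitSq, ∀ y ∈ unitSq, x.1 = y.1 → f x ∈ L.upLeaf (f y)

/-- A rectangle of the loom space. -/
def IsRect (R : Set (ℝ × ℝ)) : Prop :=
  IsOpen R ∧ ∃ f g, L.IsRectParam f g R

/-- `F, G` parametrise `R` and extend to a homeomorphism from the closed square minus
the set `M` of missing boundary points onto the closure of `R`. -/
def RectExt (M R : Set (ℝ × ℝ)) (F G : ℝ × ℝ → ℝ × ℝ) : Prop :=
  L.IsRectParam F G R ∧ HomeoOn F G (closedSq \ M) (closure R)

/-- A cusp rectangle with ideal corner corresponding to the square corner `v`. -/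
def IsCuspRectAt (R : Set (ℝ × ℝ)) (v : ℝ × ℝ) : Prop :=
  v ∈ sqCorners ∧ L.IsRect R ∧ ∃ F G, L.RectExt {v} R F G

/-- A cusp rectangle. -/
def IsCuspRect (R : Set (ℝ × ℝ)) : Prop := ∃ v, L.IsCuspRectAt R v

/-- The cusp sides of a cusp rectangle: images of the half-open sides of the square
adjacent to the missing corner. -/
def CuspSides (R : Set (ℝ × ℝ)) : Set (Set (ℝ × ℝ)) :=
  {δ | ∃ v F G, L.IsCuspRectAt R v ∧ L.RectExt {v} R F G ∧
      ∃ e ∈ sqSides, v ∈ e ∧ δ = F '' (e \ {v})}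

/-- An edge rectangle: the extension misses two opposite corners of the square. -/
def IsEdgeRect (R : Set (ℝ × ℝ)) : Prop :=
  L.IsRect R ∧
    ((∃ F G, L.RectExt {((0:ℝ),(0:ℝ)), ((1:ℝ),(1:ℝ))} R F G) ∨
     (∃ F G, L.RectExt {((1:ℝ),(0:ℝ)), ((0:ℝ),(1:ℝ))} R F G))

/-- A face rectangle: the extension misses one corner and one interior point of each
of the two sides not adjacent to that corner. -/
def IsFaceRect (R : Set (ℝ × ℝ)) : Prop :=
  L.IsRect R ∧ ∃ a ∈ Set.Ioo (0:ℝ) 1, ∃ b ∈ Set.Ioo (0:ℝ) 1, ∃ F G,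
    (L.RectExt {((0:ℝ),(0:ℝ)), (1,a), (b,1)} R F G ∨
     L.RectExt {((1:ℝ),(0:ℝ)), (0,a), (b,1)} R F G ∨
     L.RectExt {((1:ℝ),(1:ℝ)), (0,a), (b,0)} R F G ∨
     L.RectExt {((0:ℝ),(1:ℝ)), (1,a), (b,0)} R F G)

/-- A tetrahedron rectangle with missing boundary points `(a,0), (1,b), (c,1), (0,d)`. -/
def IsTetRectWith (R : Set (ℝ × ℝ)) (a b c d : ℝ) : Prop :=
  L.IsRect R ∧ a ∈ Set.Ioo (0:ℝ) 1 ∧ b ∈ Set.Ioo (0:ℝ) 1 ∧ c ∈ Set.Ioo (0:ℝ) 1 ∧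
    d ∈ Set.Ioo (0:ℝ) 1 ∧ ∃ F G, L.RectExt {(a,(0:ℝ)), ((1:ℝ),b), (c,(1:ℝ)), ((0:ℝ),d)} R F G

/-- A tetrahedron rectangle. -/
def IsTetRect (R : Set (ℝ × ℝ)) : Prop := ∃ a b c d, L.IsTetRectWith R a b c d

/-- One step of the equivalence between cusp rectangles: a cusp side of one is
contained in a cusp side of the other. -/
def CuspRel (R Q : Set (ℝ × ℝ)) : Prop :=
  L.IsCuspRect R ∧ L.IsCuspRect Q ∧
    ∃ δ ∈ L.CuspSides R, ∃ ε ∈ L.CuspSides Q, δ ⊆ ε ∨ ε ⊆ δ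

/-- Equivalence of cusp rectangles: a finite chain of elementary steps. -/
def CuspEquiv (R Q : Set (ℝ × ℝ)) : Prop := Relation.ReflTransGen L.CuspRel R Q

/-- The equivalence class of a cusp rectangle. -/
def cuspClass (R : Set (ℝ × ℝ)) : Set (Set (ℝ × ℝ)) := {Q | L.CuspEquiv R Q}

/-- A cusp: an equivalence class of cusp rectangles. -/
def IsCusp (C : Set (Set (ℝ × ℝ))) : Prop := ∃ R, L.IsCuspRect R ∧ C = L.cuspClass R

def IsUpLeaf (ℓ : Set (ℝ × ℝ)) : Prop := ∃ p, ℓ = L.upLeaf p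

def IsLoLeaf (ℓ : Set (ℝ × ℝ)) : Prop := ∃ p, ℓ = L.loLeaf p

def IsLeaf (ℓ : Set (ℝ × ℝ)) : Prop := L.IsUpLeaf ℓ ∨ L.IsLoLeaf ℓ

/-- `ℓ` is a cusp leaf for the cusp `C`. -/
def IsCuspLeafFor (ℓ : Set (ℝ × ℝ)) (C : Set (Set (ℝ × ℝ))) : Prop :=
  ∃ Q ∈ C, ∃ δ ∈ L.CuspSides Q, δ ⊆ ℓ

/-- `ℓ` contains a cusp side of some cusp rectangle. -/
def IsCuspLeaf (ℓ : Set (ℝ × ℝ)) : Prop :=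
  ∃ R, L.IsCuspRect R ∧ ∃ δ ∈ L.CuspSides R, δ ⊆ ℓ

end LoomPre

/-- The loom space axioms. -/
structure IsLoom (L : LoomPre) : Prop where
  basis : ∀ p : ℝ × ℝ, ∃ R, L.IsRect R ∧ p ∈ R
  cusp_ax : ∀ R v F G, L.IsCuspRectAt R v → L.RectExt {v} R F G →
      ∀ e ∈ sqSides, v ∈ e → ∃ Q, L.IsRect Q ∧ F '' (e \ {v}) ⊆ Q
  tet_ax : ∀ R, L.IsRect R → ∃ T, L.IsTetRect T ∧ R ⊆ T
  keane : ∀ R a b c d, L.IsTetRectWith R a b c d → a ≠ c ∧ b ≠ d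

/-- A loom isomorphism: a homeomorphism of the plane sending leaves to leaves. -/
def IsLoomIso (L M : LoomPre) (f : ℝ × ℝ → ℝ × ℝ) : Prop :=
  IsHomeomorph f ∧
    ∀ p : ℝ × ℝ,
      (f '' L.upLeaf p = M.upLeaf (f p) ∨ f '' L.upLeaf p = M.loLeaf (f p)) ∧
      (f '' L.loLeaf p = M.upLeaf (f p) ∨ f '' L.loLeaf p = M.loLeaf (f p))

/-- `P` west-east spans `Q`: a leaf of the foliation induced on `Q` by the lower
foliation is contained in `P`. -/
def WESpans (L : LoomPre) (P Q : Set (ℝ × ℝ)) : Prop := ∃ p ∈ Q, L.loLeaf p ∩ Q ⊆ P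

/-- `P` south-north spans `Q`. -/
def SNSpans (L : LoomPre) (P Q : Set (ℝ × ℝ)) : Prop := ∃ p ∈ Q, L.upLeaf p ∩ Q ⊆ P

/-- `P` spans `Q` (this determines the dihedral angle π in the induced taut
structure). -/
def Spans (L : LoomPre) (P Q : Set (ℝ × ℝ)) : Prop := WESpans L P Q ∨ SNSpans L P Q


/-!
A homeomorphism carrying leaves to leaves transports every ingredient of Guéritaud's construction
(rectangles, their extensions to the closure, skeletal rectangles, face pairings, spanning), as
long as it does not mix the two foliations. The point is that a loom isomorphism either preserves
both foliations or exchanges them globally: at each point it sends the two leaves to the two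
leaves, and which case occurs is constant along leaves, hence on rectangles, hence on the
connected plane. This needs the two leaves through a point to be distinct, which is where the
loom axioms enter: a leaf that is both upper and lower is clopen, hence the whole plane, which
is then a rectangle lying in a tetrahedron rectangle; but a tetrahedron rectangle is never
closed, since its extension sends the corner `(0,0)` of the square into the closure and outside
the rectangle. In the exchanging case one transposes the parametrising square.
-/

namespace HomeoOn

variable {F G F' G' : ℝ × ℝ → ℝ × ℝ} {D R S : Set (ℝ × ℝ)}

lemma image_eq (h : HomeoOn F G D R) : F '' D = R :=
  (image_subset_iff.mpr h.mapsTo).antisymm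
    fun y hy => ⟨G y, h.mapsTo_inv hy, h.right_inv y hy⟩

lemma comp (h : HomeoOn F G D R) (h' : HomeoOn F' G' R S) :
    HomeoOn (F' ∘ F) (G ∘ G') D S where
  contOn := h'.contOn.comp h.contOn h.mapsTo
  mapsTo := h'.mapsTo.comp h.mapsTo
  contOn_inv := h.contOn_inv.comp h'.contOn_inv h'.mapsTo_inv
  mapsTo_inv := h.mapsTo_inv.comp h'.mapsTo_inv
  left_inv x hx := by
    simp only [Function.comp_apply, h'.left_inv _ (h.mapsTo hx), h.left_inv x hx]
  right_inv y hy := by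
    simp only [Function.comp_apply, h.right_inv _ (h'.mapsTo_inv hy), h'.right_inv y hy]

lemma swap (D : Set (ℝ × ℝ)) : HomeoOn Prod.swap Prod.swap (Prod.swap '' D) D where
  contOn := continuous_swap.continuousOn
  mapsTo := by rintro _ ⟨x, hx, rfl⟩; simpa using hx
  contOn_inv := continuous_swap.continuousOn
  mapsTo_inv := mapsTo_image _ _
  left_inv x _ := Prod.swap_swap x
  right_inv y _ := Prod.swap_swap y

end HomeoOn

lemma Homeomorph.homeoOn_image (e : ℝ × ℝ ≃ₜ ℝ × ℝ) (D : Set (ℝ × ℝ)) :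
    HomeoOn e e.symm D (e '' D) where
  contOn := e.continuous.continuousOn
  mapsTo := mapsTo_image _ _
  contOn_inv := e.symm.continuous.continuousOn
  mapsTo_inv := by rintro _ ⟨x, hx, rfl⟩; simpa using hx
  left_inv x _ := e.symm_apply_apply x
  right_inv y _ := e.apply_symm_apply y

lemma OpenPartialHomeomorph.homeoOn (e : OpenPartialHomeomorph (ℝ × ℝ) (ℝ × ℝ)) :
    HomeoOn e e.symm e.source e.target where
  contOn := e.continuousOn
  mapsTo _ := e.map_source
  contOn_inv := e.continuousOn_symm
  mapsTo_inv _ := e.map_target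
  left_inv _ := e.left_inv
  right_inv _ := e.right_inv

lemma exists_homeoOn_unitSq_univ : ∃ F G, HomeoOn F G unitSq univ := by
  have hσ : IsOpenEmbedding Real.sigmoid :=
    ⟨Real.sigmoid_strictMono.isEmbedding_of_ordConnected
      (Real.range_sigmoid ▸ ordConnected_Ioo), Real.range_sigmoid ▸ isOpen_Ioo⟩
  set φ := (hσ.toOpenPartialHomeomorph Real.sigmoid).symm
  have hsource : φ.source = Ioo 0 1 := by simp [φ, Real.range_sigmoid]
  have htarget : φ.target = univ := by simp [φ]
  have hψ := (φ.prod φ).homeoOn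
  rw [OpenPartialHomeomorph.prod_source, OpenPartialHomeomorph.prod_target, hsource, htarget,
    univ_prod_univ] at hψ
  exact ⟨_, _, hψ⟩

lemma image_leaf_eq_of_mem {α β : Type*} {f : α → β} {ℓ : α → Set α} {ℓ' : β → Set β}
    (hℓ : ∀ p q, q ∈ ℓ p → ℓ q = ℓ p) (hℓ' : ∀ p q, q ∈ ℓ' p → ℓ' q = ℓ' p) {p q : α}
    (hp : f '' ℓ p = ℓ' (f p)) (hq : q ∈ ℓ p) : f '' ℓ q = ℓ' (f q) := by
  rw [hℓ p q hq, hp, hℓ' (f p) (f q) (hp ▸ mem_image_of_mem f hq)]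

lemma image_leaf_eq_iff_of_mem {α β : Type*} {f : α → β} {ℓ : α → Set α} {ℓ' : β → Set β}
    (hmem : ∀ p, p ∈ ℓ p) (hℓ : ∀ p q, q ∈ ℓ p → ℓ q = ℓ p)
    (hℓ' : ∀ p q, q ∈ ℓ' p → ℓ' q = ℓ' p) {p q : α} (hq : q ∈ ℓ p) :
    f '' ℓ q = ℓ' (f q) ↔ f '' ℓ p = ℓ' (f p) :=
  ⟨fun h => image_leaf_eq_of_mem hℓ hℓ' h (hℓ p q hq ▸ hmem p),
    fun h => image_leaf_eq_of_mem hℓ hℓ' h hq⟩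

namespace LoomPre

def transpose (L : LoomPre) : LoomPre where
  upLeaf := L.loLeaf
  loLeaf := L.upLeaf
  mem_upLeaf := L.mem_loLeaf
  mem_loLeaf := L.mem_upLeaf
  upLeaf_eq := L.loLeaf_eq
  loLeaf_eq := L.upLeaf_eq
  upLeaf_conn := L.loLeaf_conn
  loLeaf_conn := L.upLeaf_conn

def PreservesLeaves (L M : LoomPre) (f : ℝ × ℝ → ℝ × ℝ) : Prop :=
  ∀ p, f '' L.upLeaf p = M.upLeaf (f p) ∧ f '' L.loLeaf p = M.loLeaf (f p)

variable {L M : LoomPre} {F G : ℝ × ℝ → ℝ × ℝ} {R S : Set (ℝ × ℝ)}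

lemma IsRectParam.exists_mem_loLeaf_mem_upLeaf (h : L.IsRectParam F G R) {p r : ℝ × ℝ}
    (hp : p ∈ R) (hr : r ∈ R) : ∃ m, m ∈ L.loLeaf p ∧ r ∈ L.upLeaf m := by
  obtain ⟨z, hz, rfl⟩ : p ∈ F '' unitSq := h.image ▸ hp
  obtain ⟨x, hx, rfl⟩ : r ∈ F '' unitSq := h.image ▸ hr
  have hxz : ((x.1, z.2) : ℝ × ℝ) ∈ unitSq := ⟨hx.1, hz.2⟩
  exact ⟨F (x.1, z.2), h.horiz _ hxz z hz rfl, h.vert x hx _ hxz rfl⟩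

lemma RectExt.apply_notMem (h : L.RectExt S R F G) {x : ℝ × ℝ} (hx : x ∈ closedSq \ S)
    (hx' : x ∉ unitSq) : F x ∉ R := by
  intro hxR
  obtain ⟨y, hy, hxy⟩ : F x ∈ F '' unitSq := h.1.image ▸ hxR
  have : x = y := by rw [← h.2.left_inv x hx, ← hxy, h.1.homeo.left_inv y hy]
  exact hx' (this ▸ hy)

lemma IsTetRect.not_isClosed (h : L.IsTetRect R) : ¬ IsClosed R := by
  obtain ⟨a, b, c, d, -, ha, -, -, hd, F, G, hext⟩ := h
  intro hR
  have h0 : ((0 : ℝ), (0 : ℝ)) ∈ closedSq \ {(a, 0), (1, b), (c, 1), (0, d)} := by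
    refine ⟨⟨⟨le_rfl, zero_le_one⟩, le_rfl, zero_le_one⟩, ?_⟩
    simp only [mem_insert_iff, mem_singleton_iff, Prod.ext_iff]
    rintro (⟨h, -⟩ | ⟨h, -⟩ | ⟨-, h⟩ | ⟨-, h⟩) <;> linarith [ha.1, hd.1]
  refine hext.apply_notMem h0 (fun h => lt_irrefl 0 h.1.1) ?_
  exact hR.closure_eq ▸ hext.2.mapsTo h0

lemma isRect_univ_of_forall_leaf_eq_univ (hup : ∀ p, L.upLeaf p = univ)
    (hlo : ∀ p, L.loLeaf p = univ) : L.IsRect univ := by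
  obtain ⟨F, G, h⟩ := exists_homeoOn_unitSq_univ
  exact ⟨isOpen_univ, F, G, h, h.image_eq, fun _ _ y _ _ => hlo (F y) ▸ mem_univ _,
    fun _ _ y _ _ => hup (F y) ▸ mem_univ _⟩

lemma IsRect.subset_upLeaf_of_upLeaf_eq_loLeaf (hR : L.IsRect R) {p : ℝ × ℝ} (hp : p ∈ R)
    (h : L.upLeaf p = L.loLeaf p) : R ⊆ L.upLeaf p := by
  obtain ⟨-, F, G, hpar⟩ := hR
  intro r hr
  obtain ⟨m, hm, hrm⟩ := hpar.exists_mem_loLeaf_mem_upLeaf hp hr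
  rwa [L.upLeaf_eq p m (h ▸ hm)] at hrm

lemma upLeaf_ne_loLeaf (hL : IsLoom L) (p : ℝ × ℝ) : L.upLeaf p ≠ L.loLeaf p := by
  intro h
  set ℓ := L.upLeaf p
  have hdeg : ∀ q ∈ ℓ, L.upLeaf q = ℓ ∧ L.loLeaf q = ℓ := fun q hq =>
    ⟨L.upLeaf_eq p q hq, (L.loLeaf_eq p q (h ▸ hq)).trans h.symm⟩
  have hsub : ∀ R, L.IsRect R → ∀ q ∈ R, q ∈ ℓ → R ⊆ ℓ := fun R hR q hqR hq =>
    (hdeg q hq).1 ▸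
      hR.subset_upLeaf_of_upLeaf_eq_loLeaf hqR ((hdeg q hq).1.trans (hdeg q hq).2.symm)
  have hopen : IsOpen ℓ := by
    refine isOpen_iff_forall_mem_open.mpr fun q hq => ?_
    obtain ⟨R, hR, hqR⟩ := hL.basis q
    exact ⟨R, hsub R hR q hqR hq, hR.1, hqR⟩
  have hclosed : IsClosed ℓ := by
    refine isOpen_compl_iff.mp (isOpen_iff_forall_mem_open.mpr fun q hq => ?_)
    obtain ⟨R, hR, hqR⟩ := hL.basis q
    exact ⟨R, fun r hrR hr => hq (hsub R hR r hrR hr hqR), hR.1, hqR⟩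
  have hℓ : ℓ = univ := IsClopen.eq_univ ⟨hclosed, hopen⟩ ⟨p, L.mem_upLeaf p⟩
  have huniv : L.IsRect univ := isRect_univ_of_forall_leaf_eq_univ
    (fun q => hℓ ▸ (hdeg q (hℓ ▸ mem_univ q)).1) (fun q => hℓ ▸ (hdeg q (hℓ ▸ mem_univ q)).2)
  obtain ⟨T, hT, hTuniv⟩ := hL.tet_ax univ huniv
  exact hT.not_isClosed (eq_univ_of_univ_subset hTuniv ▸ isClosed_univ)

end LoomPre

namespace IsLoomIso

variable {L M : LoomPre} {f : ℝ × ℝ → ℝ × ℝ}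

lemma image_upLeaf_eq_iff (hL : IsLoom L) (hf : IsLoomIso L M f) (p : ℝ × ℝ) :
    f '' L.upLeaf p = M.upLeaf (f p) ↔ f '' L.loLeaf p = M.loLeaf (f p) := by
  have hne : f '' L.upLeaf p ≠ f '' L.loLeaf p := fun h =>
    L.upLeaf_ne_loLeaf hL p (hf.1.injective.image_injective h)
  obtain ⟨hu | hu, hl | hl⟩ := hf.2 p
  · exact (hne (hu.trans hl.symm)).elim
  · exact iff_of_true hu hl
  · exact iff_of_false (fun h => hne (h.trans hl.symm)) (fun h => hne (hu.trans h.symm))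
  · exact (hne (hu.trans hl.symm)).elim

lemma image_upLeaf_eq_iff_of_mem_rect (hL : IsLoom L) (hf : IsLoomIso L M f)
    {R : Set (ℝ × ℝ)} (hR : L.IsRect R) {p r : ℝ × ℝ} (hp : p ∈ R) (hr : r ∈ R) :
    f '' L.upLeaf r = M.upLeaf (f r) ↔ f '' L.upLeaf p = M.upLeaf (f p) := by
  obtain ⟨-, F, G, hpar⟩ := hR
  obtain ⟨m, hm, hrm⟩ := hpar.exists_mem_loLeaf_mem_upLeaf hp hr
  calc _ ↔ f '' L.upLeaf m = M.upLeaf (f m) :=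
        image_leaf_eq_iff_of_mem L.mem_upLeaf L.upLeaf_eq M.upLeaf_eq hrm
    _ ↔ f '' L.loLeaf m = M.loLeaf (f m) := hf.image_upLeaf_eq_iff hL m
    _ ↔ f '' L.loLeaf p = M.loLeaf (f p) :=
        image_leaf_eq_iff_of_mem L.mem_loLeaf L.loLeaf_eq M.loLeaf_eq hm
    _ ↔ _ := (hf.image_upLeaf_eq_iff hL p).symm

theorem preservesLeaves_or_transpose (hL : IsLoom L) (hf : IsLoomIso L M f) :
    L.PreservesLeaves M f ∨ L.transpose.PreservesLeaves M f := by
  have hconst : IsLocallyConstant fun p => f '' L.upLeaf p = M.upLeaf (f p) :=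
    (IsLocallyConstant.iff_eventually_eq _).mpr fun p => by
      obtain ⟨R, hR, hpR⟩ := hL.basis p
      filter_upwards [hR.1.mem_nhds hpR] with r hr
      exact propext (hf.image_upLeaf_eq_iff_of_mem_rect hL hR hpR hr)
  by_cases h0 : f '' L.upLeaf 0 = M.upLeaf (f 0)
  · refine .inl fun p => ?_
    have hp : f '' L.upLeaf p = M.upLeaf (f p) := hconst.apply_eq_of_preconnectedSpace p 0 ▸ h0
    exact ⟨hp, (hf.image_upLeaf_eq_iff hL p).mp hp⟩
  · refine .inr fun p => ?_
    have hp : f '' L.upLeaf p ≠ M.upLeaf (f p) := fun hp =>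
      h0 (hconst.apply_eq_of_preconnectedSpace p 0 ▸ hp)
    exact ⟨(hf.2 p).2.resolve_right (mt (hf.image_upLeaf_eq_iff hL p).mpr hp),
      (hf.2 p).1.resolve_left hp⟩

end IsLoomIso

namespace LoomPre

variable {L M : LoomPre} {F G : ℝ × ℝ → ℝ × ℝ} {R S : Set (ℝ × ℝ)}

section Image

variable {e : ℝ × ℝ ≃ₜ ℝ × ℝ} (he : L.PreservesLeaves M e)
include he

lemma PreservesLeaves.symm : M.PreservesLeaves L e.symm := fun q => by
  obtain ⟨hu, hl⟩ := he (e.symm q)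
  rw [e.apply_symm_apply] at hu hl
  simp only [← hu, ← hl, e.image_symm, e.preimage_image, and_self]

lemma IsRectParam.map (h : L.IsRectParam F G R) :
    M.IsRectParam (e ∘ F) (G ∘ e.symm) (e '' R) where
  homeo := h.homeo.comp (e.homeoOn_image R)
  image := by rw [image_comp, h.image]
  horiz x hx y hy hxy := (he (F y)).2 ▸ mem_image_of_mem e (h.horiz x hx y hy hxy)
  vert x hx y hy hxy := (he (F y)).1 ▸ mem_image_of_mem e (h.vert x hx y hy hxy)

lemma IsRect.map (h : L.IsRect R) : M.IsRect (e '' R) :=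
  let ⟨hR, _, _, hpar⟩ := h
  ⟨e.isOpen_image.mpr hR, _, _, hpar.map he⟩

lemma RectExt.map (h : L.RectExt S R F G) : M.RectExt S (e '' R) (e ∘ F) (G ∘ e.symm) :=
  ⟨h.1.map he, e.image_closure R ▸ h.2.comp (e.homeoOn_image _)⟩

lemma IsTetRect.map (h : L.IsTetRect R) : M.IsTetRect (e '' R) :=
  let ⟨a, b, c, d, hR, ha, hb, hc, hd, _, _, hext⟩ := h
  ⟨a, b, c, d, hR.map he, ha, hb, hc, hd, _, _, hext.map he⟩

lemma IsFaceRect.map (h : L.IsFaceRect R) : M.IsFaceRect (e '' R) :=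
  let ⟨hR, a, ha, b, hb, _, _, hext⟩ := h
  ⟨hR.map he, a, ha, b, hb, _, _, hext.imp (·.map he) <| .imp (·.map he) <|
    .imp (·.map he) (·.map he)⟩

lemma IsEdgeRect.map (h : L.IsEdgeRect R) : M.IsEdgeRect (e '' R) :=
  ⟨h.1.map he, h.2.imp (fun ⟨_, _, hext⟩ => ⟨_, _, hext.map he⟩)
    (fun ⟨_, _, hext⟩ => ⟨_, _, hext.map he⟩)⟩

end Image

section Transpose

lemma image_swap_unitSq : Prod.swap '' unitSq = unitSq := image_swap_prod _ _

lemma image_swap_closedSq : Prod.swap '' closedSq = closedSq := image_swap_prod _ _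

lemma IsRectParam.transpose (h : L.IsRectParam F G R) :
    L.transpose.IsRectParam (F ∘ Prod.swap) (Prod.swap ∘ G) R where
  homeo := image_swap_unitSq ▸ (HomeoOn.swap unitSq).comp h.homeo
  image := by rw [image_comp, image_swap_unitSq, h.image]
  horiz x hx y hy hxy := h.vert _ ⟨hx.2, hx.1⟩ _ ⟨hy.2, hy.1⟩ hxy
  vert x hx y hy hxy := h.horiz _ ⟨hx.2, hx.1⟩ _ ⟨hy.2, hy.1⟩ hxy

lemma IsRect.transpose (h : L.IsRect R) : L.transpose.IsRect R :=
  let ⟨hR, _, _, hpar⟩ := h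
  ⟨hR, _, _, hpar.transpose⟩

lemma RectExt.transpose {S' : Set (ℝ × ℝ)} (h : L.RectExt S R F G)
    (hS : ∀ x y : ℝ, (x, y) ∈ S' ↔ (y, x) ∈ S) :
    L.transpose.RectExt S' R (F ∘ Prod.swap) (Prod.swap ∘ G) := by
  have hS' : Prod.swap '' S = S' := by
    ext ⟨x, y⟩
    rw [hS, image_swap_eq_preimage_swap]
    rfl
  refine ⟨h.1.transpose, ?_⟩
  have := (HomeoOn.swap _).comp h.2
  rwa [image_sdiff Prod.swap_injective, image_swap_closedSq, hS'] at this

lemma IsTetRect.transpose (h : L.IsTetRect R) : L.transpose.IsTetRect R := by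
  obtain ⟨a, b, c, d, hR, ha, hb, hc, hd, F, G, hext⟩ := h
  refine ⟨d, c, b, a, hR.transpose, hd, hc, hb, ha, _, _, hext.transpose fun _ _ => ?_⟩
  simp only [mem_insert_iff, mem_singleton_iff, Prod.mk.injEq]
  tauto

lemma IsFaceRect.transpose (h : L.IsFaceRect R) : L.transpose.IsFaceRect R := by
  obtain ⟨hR, a, ha, b, hb, F, G, hext⟩ := h
  refine ⟨hR.transpose, b, hb, a, ha, F ∘ Prod.swap, Prod.swap ∘ G, ?_⟩
  rcases hext with hext | hext | hext | hext
  · refine .inl (hext.transpose fun _ _ => ?_)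
    simp only [mem_insert_iff, mem_singleton_iff, Prod.mk.injEq]
    tauto
  · refine .inr <| .inr <| .inr (hext.transpose fun _ _ => ?_)
    simp only [mem_insert_iff, mem_singleton_iff, Prod.mk.injEq]
    tauto
  · refine .inr <| .inr <| .inl (hext.transpose fun _ _ => ?_)
    simp only [mem_insert_iff, mem_singleton_iff, Prod.mk.injEq]
    tauto
  · refine .inr <| .inl (hext.transpose fun _ _ => ?_)
    simp only [mem_insert_iff, mem_singleton_iff, Prod.mk.injEq]
    tauto

lemma IsEdgeRect.transpose (h : L.IsEdgeRect R) : L.transpose.IsEdgeRect R := by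
  refine ⟨h.1.transpose, h.2.imp (fun ⟨_, _, hext⟩ => ⟨_, _, hext.transpose fun _ _ => ?_⟩)
    (fun ⟨_, _, hext⟩ => ⟨_, _, hext.transpose fun _ _ => ?_⟩)⟩ <;>
  · simp only [mem_insert_iff, mem_singleton_iff, Prod.mk.injEq]
    tauto

end Transpose

end LoomPre

namespace IsLoomIso

variable {L M : LoomPre}

lemma symm (hL : IsLoom L) {e : ℝ × ℝ ≃ₜ ℝ × ℝ} (he : IsLoomIso L M e) :
    IsLoomIso M L e.symm := by
  refine ⟨e.symm.isHomeomorph, fun q => ?_⟩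
  rcases he.preservesLeaves_or_transpose hL with h | h
  · exact ⟨.inl (h.symm q).1, .inr (h.symm q).2⟩
  · exact ⟨.inr (h.symm q).1, .inl (h.symm q).2⟩

lemma spans_image {f : ℝ × ℝ → ℝ × ℝ} (hf : IsLoomIso L M f) {E P : Set (ℝ × ℝ)}
    (h : Spans L E P) : Spans M (f '' E) (f '' P) := by
  have key : ∀ ℓ, ∀ p ∈ P, ℓ ∩ P ⊆ E →
      (f '' ℓ = M.upLeaf (f p) ∨ f '' ℓ = M.loLeaf (f p)) → Spans M (f '' E) (f '' P) := by
    intro ℓ p hp hsub hℓ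
    have himage : f '' ℓ ∩ f '' P ⊆ f '' E :=
      image_inter hf.1.injective ▸ image_mono hsub
    rcases hℓ with hℓ | hℓ
    · exact .inr ⟨f p, mem_image_of_mem f hp, hℓ ▸ himage⟩
    · exact .inl ⟨f p, mem_image_of_mem f hp, hℓ ▸ himage⟩
  rcases h with ⟨p, hp, hsub⟩ | ⟨p, hp, hsub⟩
  · exact key _ p hp hsub (hf.2 p).2
  · exact key _ p hp hsub (hf.2 p).1

end IsLoomIso

theorem gueritaud_functorial_general (L M : LoomPre) (hL : IsLoom L)
    (f : ℝ × ℝ → ℝ × ℝ) (hf : IsLoomIso L M f) :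
    -- f sends skeletal rectangles of L to skeletal rectangles of M
    (∀ P, L.IsTetRect P → M.IsTetRect (f '' P)) ∧
    (∀ P, L.IsFaceRect P → M.IsFaceRect (f '' P)) ∧
    (∀ P, L.IsEdgeRect P → M.IsEdgeRect (f '' P)) ∧
    -- f sends face pairings to face pairings
    (∀ P Q, L.IsTetRect P → L.IsTetRect Q → P ≠ Q → L.IsFaceRect (P ∩ Q) →
      M.IsFaceRect (f '' P ∩ f '' Q)) ∧
    -- f preserves the induced taut structure
    (∀ E P, L.IsEdgeRect E → L.IsTetRect P → E ⊆ P →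
      (Spans L E P ↔ Spans M (f '' E) (f '' P))) ∧
    -- the induced map is invertible, hence a taut isomorphism
    (∃ finv, IsLoomIso M L finv ∧ (∀ P : Set (ℝ × ℝ), finv '' (f '' P) = P) ∧
      (∀ P : Set (ℝ × ℝ), f '' (finv '' P) = P)) ∧
    -- identities are sent to identities
    (∀ P : Set (ℝ × ℝ), (id : ℝ × ℝ → ℝ × ℝ) '' P = P) ∧
    -- compositions are sent to compositions
    (∀ (N : LoomPre) (g : ℝ × ℝ → ℝ × ℝ), IsLoom N → IsLoomIso M N g →
      ∀ P : Set (ℝ × ℝ), (g ∘ f) '' P = g '' (f '' P)) := by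
  obtain ⟨e, rfl⟩ := isHomeomorph_iff_exists_homeomorph.mp hf.1
  have hskel : ∀ P, (L.IsTetRect P → M.IsTetRect (e '' P)) ∧
      (L.IsFaceRect P → M.IsFaceRect (e '' P)) ∧ (L.IsEdgeRect P → M.IsEdgeRect (e '' P)) := by
    rcases hf.preservesLeaves_or_transpose hL with h | h
    · exact fun P => ⟨(·.map h), (·.map h), (·.map h)⟩
    · exact fun P => ⟨(·.transpose.map h), (·.transpose.map h), (·.transpose.map h)⟩
  have hinv := hf.symm hL
  refine ⟨fun P => (hskel P).1, fun P => (hskel P).2.1, fun P => (hskel P).2.2,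
    fun P Q _ _ _ hPQ => image_inter e.injective ▸ (hskel _).2.1 hPQ,
    fun E P _ _ _ => ⟨hf.spans_image, fun h => ?_⟩,
    ⟨e.symm, hinv, e.symm_image_image, e.image_symm_image⟩,
    image_id, fun N g _ _ P => image_comp g e P⟩
  simpa only [e.image_symm, e.preimage_image] using hinv.spans_image h

/-- Guéritaud's construction is a functor from the category of loom spaces to the
category of locally veering triangulations: a loom isomorphism `f : L → M` induces a
map of the induced triangulations (sending the cell of a skeletal rectangle `P` to the
cell of `f '' P`) which is a taut isomorphism; moreover identities induce identities
and compositions induce compositions. -/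
theorem gueritaud_functorial (L M : LoomPre) (hL : IsLoom L) (hM : IsLoom M)
    (f : ℝ × ℝ → ℝ × ℝ) (hf : IsLoomIso L M f) :
    -- f sends skeletal rectangles of L to skeletal rectangles of M
    (∀ P, L.IsTetRect P → M.IsTetRect (f '' P)) ∧
    (∀ P, L.IsFaceRect P → M.IsFaceRect (f '' P)) ∧
    (∀ P, L.IsEdgeRect P → M.IsEdgeRect (f '' P)) ∧
    -- f sends face pairings to face pairings
    (∀ P Q, L.IsTetRect P → L.IsTetRect Q → P ≠ Q → L.IsFaceRect (P ∩ Q) →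
      M.IsFaceRect (f '' P ∩ f '' Q)) ∧
    -- f preserves the induced taut structure
    (∀ E P, L.IsEdgeRect E → L.IsTetRect P → E ⊆ P →
      (Spans L E P ↔ Spans M (f '' E) (f '' P))) ∧
    -- the induced map is invertible, hence a taut isomorphism
    (∃ finv, IsLoomIso M L finv ∧ (∀ P : Set (ℝ × ℝ), finv '' (f '' P) = P) ∧
      (∀ P : Set (ℝ × ℝ), f '' (finv '' P) = P)) ∧
    -- identities are sent to identities
    (∀ P : Set (ℝ × ℝ), (id : ℝ × ℝ → ℝ × ℝ) '' P = P) ∧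
    -- compositions are sent to compositions
    (∀ (N : LoomPre) (g : ℝ × ℝ → ℝ × ℝ), IsLoom N → IsLoomIso M N g →
      ∀ P : Set (ℝ × ℝ), (g ∘ f) '' P = g '' (f '' P)) :=
  gueritaud_functorial_general L M hL f hf
end
end
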